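/- Let L be a linear operator on real n×n matrices that maps symmetric matrices to symmetric matrices. Then L is resolvent positive if and only if for all symmetric positive semidefinite real n×n matrices V₁ and V₂ with ⟨V₁, V₂⟩_F = 0 one has ⟨L(V₁), V₂⟩_F ≥ 0, where ⟨M₁, M₂⟩_F := trace(M₁ᵀ M₂) is the Frobenius inner product. -/

import Mathlib

open Matrix

/-- A linear operator `L` on real `n × n` matrices, mapping symmetric matrices to symmetric
matrices, is *resolvent positive* if there is `α₀ ∈ ℝ` such that for every `α > α₀` the
operator `α • id - L`, restricted to symmetric matrices, is bijective and its inverse maps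
every symmetric positive semidefinite matrix to a symmetric positive semidefinite matrix. -/
def ResolventPositive {n : ℕ} (L : Matrix (Fin n) (Fin n) ℝ → Matrix (Fin n) (Fin n) ℝ) : Prop :=
  ∃ α₀ : ℝ, ∀ α : ℝ, α₀ < α →
    (∀ Y : Matrix (Fin n) (Fin n) ℝ, Y.IsSymm →
      ∃! X : Matrix (Fin n) (Fin n) ℝ, X.IsSymm ∧ α • X - L X = Y) ∧
    (∀ X Y : Matrix (Fin n) (Fin n) ℝ, X.IsSymm → α • X - L X = Y → Y.PosSemidef →
      X.PosSemidef)

/-!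
For large `α` the resolvent `(α - L)⁻¹ V₁` of a positive semidefinite `V₁` is positive
semidefinite, and `α (α - L)⁻¹ V₁ → V₁` as `α → ∞`. Since `⟨V₁, V₂⟩_F = 0`, the number
`⟨L (α (α - L)⁻¹ V₁), V₂⟩_F` equals `α² ⟨(α - L)⁻¹ V₁, V₂⟩_F ≥ 0`, and in the limit
`⟨L V₁, V₂⟩_F ≥ 0`.

Conversely, `α - L` is injective, hence bijective on symmetric matrices, once `α > ‖L‖`. If
`α X - L X = Y ⪰ 0` and `μ` is the least eigenvalue of `X` with unit eigenvector `v`, then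
`X - μ I ⪰ 0` and `v vᵀ ⪰ 0` are Frobenius-orthogonal, and cross-positivity gives
`0 ≤ vᵀ Y v ≤ μ (α - vᵀ L(I) v)`; so `μ ≥ 0` as soon as `α > ‖L I‖`.
-/

open Filter Topology

namespace ContinuousLinearMap

variable {E : Type*} [NormedAddCommGroup E] [NormedSpace ℝ E] (T : E →L[ℝ] E)

theorem norm_le_of_smul_sub_apply_eq {α : ℝ} (hα : ‖T‖ < α) {x y : E}
    (h : α • x - T x = y) : ‖x‖ ≤ ‖y‖ / (α - ‖T‖) := by
  rw [le_div_iff₀ (sub_pos.mpr hα)]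
  have hα₀ : 0 ≤ α := (norm_nonneg T).trans hα.le
  have : α * ‖x‖ ≤ ‖y‖ + ‖T‖ * ‖x‖ := calc
    α * ‖x‖ = ‖y + T x‖ := by rw [← h, sub_add_cancel, norm_smul, Real.norm_of_nonneg hα₀]
    _ ≤ ‖y‖ + ‖T‖ * ‖x‖ := by grw [norm_add_le, T.le_opNorm x]
  linarith

theorem injective_smul_sub_apply {α : ℝ} (hα : ‖T‖ < α) :
    Function.Injective fun x => α • x - T x := by
  intro x x' h
  have h₀ : α • (x - x') - T (x - x') = 0 := by
    rw [smul_sub, map_sub, sub_sub_sub_comm]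
    exact sub_eq_zero.mpr h
  have := T.norm_le_of_smul_sub_apply_eq hα h₀
  rw [norm_zero, zero_div, norm_le_zero_iff, sub_eq_zero] at this
  exact this

theorem tendsto_smul_of_smul_sub_apply_eq {x : ℝ → E} {y : E}
    (h : ∀ᶠ α in atTop, α • x α - T (x α) = y) :
    Tendsto (fun α => α • x α) atTop (𝓝 y) := by
  have hx : Tendsto x atTop (𝓝 0) := by
    refine squeeze_zero_norm' (a := fun α => ‖y‖ / (α - ‖T‖)) ?_
      (tendsto_const_nhds.div_atTop (tendsto_atTop_add_const_right atTop (-‖T‖) tendsto_id))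
    filter_upwards [h, eventually_gt_atTop ‖T‖] with α hα hT
    exact T.norm_le_of_smul_sub_apply_eq hT hα
  have hy : Tendsto (fun α => y + T (x α)) atTop (𝓝 y) := by
    simpa using tendsto_const_nhds.add ((T.continuous.tendsto 0).comp hx)
  refine hy.congr' ?_
  filter_upwards [h] with α hα
  rw [← hα, sub_add_cancel]

end ContinuousLinearMap

theorem LinearMap.existsUnique_mem_apply_eq_of_injective {K V : Type*} [Field K] [AddCommGroup V]
    [Module K V] [FiniteDimensional K V] {f : V →ₗ[K] V} (hf : Function.Injective f)
    {p : Submodule K V} (hp : ∀ x ∈ p, f x ∈ p) {y : V} (hy : y ∈ p) :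
    ∃! x, x ∈ p ∧ f x = y := by
  have hg : Function.Injective (f.restrict hp) := fun a b hab =>
    Subtype.ext (hf (congrArg Subtype.val hab))
  obtain ⟨x, hx⟩ := LinearMap.injective_iff_surjective.mp hg ⟨y, hy⟩
  have hfx : f x = y := congrArg Subtype.val hx
  exact ⟨x, ⟨x.2, hfx⟩, fun x' ⟨_, hx'⟩ => hf (hx'.trans hfx.symm)⟩

namespace Matrix

open scoped ComplexOrder

def symmetricSubmodule (ι R : Type*) [CommSemiring R] : Submodule R (Matrix ι ι R) where
  carrier := {A | A.IsSymm}
  add_mem' := IsSymm.add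
  zero_mem' := isSymm_zero
  smul_mem' c _ h := h.smul c

variable {ι R 𝕜 : Type*} [Fintype ι]

theorem trace_transpose_mul_vecMulVec [CommSemiring R] (M : Matrix ι ι R) (v w : ι → R) :
    (Mᵀ * vecMulVec v w).trace = v ⬝ᵥ (M *ᵥ w) := by
  rw [mul_vecMulVec, trace_vecMulVec, mulVec_transpose, dotProduct_mulVec, dotProduct_comm]

open scoped MatrixOrder in
theorem PosSemidef.trace_mul_nonneg [RCLike 𝕜] [DecidableEq ι] {A B : Matrix ι ι 𝕜}
    (hA : A.PosSemidef) (hB : B.PosSemidef) : 0 ≤ (A * B).trace := by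
  set S := CFC.sqrt A
  have hS : Sᴴ = S := (CFC.sqrt_nonneg A).posSemidef.isHermitian.eq
  have hSB : (S * B * Sᴴ).PosSemidef := hB.mul_mul_conjTranspose_same S
  rw [← CFC.sqrt_mul_sqrt_self A hA.nonneg, mul_assoc, trace_mul_comm]
  rw [hS] at hSB
  exact hSB.trace_nonneg

open scoped MatrixOrder in
theorem IsHermitian.posSemidef_sub_smul_one [RCLike 𝕜] [DecidableEq ι] {A : Matrix ι ι 𝕜}
    (hA : A.IsHermitian) {c : ℝ} (hc : ∀ i, c ≤ hA.eigenvalues i) :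
    (A - c • (1 : Matrix ι ι 𝕜)).PosSemidef := by
  have : algebraMap ℝ (Matrix ι ι 𝕜) c ≤ A := by
    rw [algebraMap_le_iff_le_spectrum (isHermitian_iff_isSelfAdjoint.mp hA),
      hA.spectrum_real_eq_range_eigenvalues]
    rintro _ ⟨i, rfl⟩
    exact hc i
  rwa [Algebra.algebraMap_eq_smul_one, Matrix.le_iff] at this

open scoped Matrix.Norms.L2Operator in
theorem dotProduct_mulVec_le_l2_opNorm [DecidableEq ι] (M : Matrix ι ι ℝ)
    (v : EuclideanSpace ℝ ι) : v ⬝ᵥ (M *ᵥ v) ≤ ‖M‖ * ‖v‖ ^ 2 := by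
  rw [← inner_toEuclideanCLM, ← l2_opNorm_toEuclideanCLM, sq, ← mul_assoc, mul_comm _ ‖v‖]
  exact (real_inner_le_norm _ _).trans (by grw [ContinuousLinearMap.le_opNorm])

end Matrix

def CrossPositive {ι : Type*} [Fintype ι] (L : Matrix ι ι ℝ → Matrix ι ι ℝ) : Prop :=
  ∀ V₁ V₂ : Matrix ι ι ℝ, V₁.PosSemidef → V₂.PosSemidef →
    (V₁ᵀ * V₂).trace = 0 → 0 ≤ ((L V₁)ᵀ * V₂).trace

open scoped Matrix.Norms.L2Operator

theorem CrossPositive.posSemidef_of_smul_sub_apply {ι : Type*} [Fintype ι] [DecidableEq ι]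
    {L : Matrix ι ι ℝ →ₗ[ℝ] Matrix ι ι ℝ} (hL : CrossPositive ⇑L) {α : ℝ} (hα : ‖L 1‖ < α)
    {X : Matrix ι ι ℝ} (hX : X.IsHermitian) (hY : (α • X - L X).PosSemidef) : X.PosSemidef := by
  rw [hX.posSemidef_iff_eigenvalues_nonneg]
  intro i
  have : Nonempty ι := ⟨i⟩
  obtain ⟨i₀, hi₀⟩ := Finite.exists_min hX.eigenvalues
  set μ := hX.eigenvalues i₀
  set v := hX.eigenvectorBasis i₀
  have hv : ‖v‖ = 1 := hX.eigenvectorBasis.orthonormal.1 i₀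
  have hvv : ⇑v ⬝ᵥ ⇑v = 1 := by
    have h := EuclideanSpace.inner_eq_star_dotProduct v v
    rwa [star_trivial, real_inner_self_eq_norm_sq, hv, one_pow, eq_comm] at h
  have hXv : X *ᵥ v = μ • ⇑v := hX.mulVec_eigenvectorBasis i₀
  have hV₁ : (X - μ • 1).PosSemidef := hX.posSemidef_sub_smul_one hi₀
  have hV₂ : (vecMulVec ⇑v ⇑v).PosSemidef := by
    simpa using posSemidef_vecMulVec_self_star (v : ι → ℝ)
  have horth : ((X - μ • 1)ᵀ * vecMulVec ⇑v ⇑v).trace = 0 := by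
    rw [trace_transpose_mul_vecMulVec, sub_mulVec, hXv, smul_mulVec, one_mulVec, sub_self,
      dotProduct_zero]
  have hcross := hL _ _ hV₁ hV₂ horth
  rw [trace_transpose_mul_vecMulVec, map_sub, map_smul, sub_mulVec, smul_mulVec, dotProduct_sub,
    dotProduct_smul, smul_eq_mul] at hcross
  have hYv := hY.dotProduct_mulVec_nonneg v
  rw [star_trivial, sub_mulVec, smul_mulVec, hXv, dotProduct_sub, dotProduct_smul, dotProduct_smul,
    hvv, smul_eq_mul, smul_eq_mul, mul_one] at hYv
  have hc := dotProduct_mulVec_le_l2_opNorm (L 1) v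
  rw [hv, one_pow, mul_one] at hc
  have hμ : 0 ≤ μ := by nlinarith
  exact hμ.trans (hi₀ i)

theorem ResolventPositive.crossPositive {n : ℕ}
    {L : Matrix (Fin n) (Fin n) ℝ →ₗ[ℝ] Matrix (Fin n) (Fin n) ℝ}
    (hL : ResolventPositive fun X => L X) :
    CrossPositive ⇑L := by
  intro V₁ V₂ hV₁ hV₂ horth
  obtain ⟨α₀, hα₀⟩ := hL
  have hres : ∀ᶠ α : ℝ in atTop,
      ∃ X : Matrix (Fin n) (Fin n) ℝ, X.PosSemidef ∧ α • X - L X = V₁ := by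
    filter_upwards [eventually_gt_atTop α₀] with α hα
    obtain ⟨X, ⟨hXs, hX⟩, -⟩ := (hα₀ α hα).1 V₁ (isHermitian_iff_isSymm.mp hV₁.isHermitian)
    exact ⟨X, (hα₀ α hα).2 X V₁ hXs hX hV₁, hX⟩
  obtain ⟨X, hX⟩ := hres.choice
  have hlim : Tendsto (fun α => α • X α) atTop (𝓝 V₁) :=
    (LinearMap.toContinuousLinearMap L).tendsto_smul_of_smul_sub_apply_eq (hX.mono fun _ h => h.2)
  have hcont : Continuous fun M => ((L M)ᵀ * V₂).trace := by
    have := L.continuous_of_finiteDimensional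
    fun_prop
  refine ge_of_tendsto ((hcont.tendsto V₁).comp hlim) ?_
  filter_upwards [hX] with α ⟨hXpsd, hXeq⟩
  have hLX : L (X α) = α • X α - V₁ := by rw [← hXeq, sub_sub_cancel]
  have hXt : (X α)ᵀ = X α := isHermitian_iff_isSymm.mp hXpsd.isHermitian
  show 0 ≤ ((L (α • X α))ᵀ * V₂).trace
  rw [map_smul, hLX, transpose_smul, transpose_sub, transpose_smul, hXt, smul_mul, sub_mul,
    smul_mul, trace_smul, trace_sub, trace_smul, horth, sub_zero, smul_eq_mul, smul_eq_mul,
    ← mul_assoc]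
  exact mul_nonneg (mul_self_nonneg α) (hXpsd.trace_mul_nonneg hV₂)

theorem CrossPositive.resolventPositive {n : ℕ}
    {L : Matrix (Fin n) (Fin n) ℝ →ₗ[ℝ] Matrix (Fin n) (Fin n) ℝ}
    (hLsymm : ∀ X : Matrix (Fin n) (Fin n) ℝ, X.IsSymm → (L X).IsSymm) (hL : CrossPositive ⇑L) :
    ResolventPositive fun X => L X := by
  set T := LinearMap.toContinuousLinearMap L
  refine ⟨‖T‖ + ‖L 1‖, fun α hα => ?_⟩
  refine ⟨fun Y hY => ?_, fun X Y hX hXY hY => ?_⟩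
  · have hinj : Function.Injective (α • LinearMap.id - L :
        Matrix (Fin n) (Fin n) ℝ →ₗ[ℝ] Matrix (Fin n) (Fin n) ℝ) :=
      T.injective_smul_sub_apply (by linarith [norm_nonneg (L 1)])
    exact LinearMap.existsUnique_mem_apply_eq_of_injective (p := symmetricSubmodule _ ℝ) hinj
      (fun X hX => (hX.smul α).sub (hLsymm X hX)) hY
  · subst hXY
    exact hL.posSemidef_of_smul_sub_apply (by linarith [norm_nonneg T])
      (isHermitian_iff_isSymm.mpr hX) hY

/-- A linear operator `L` mapping symmetric matrices to symmetric matrices is resolvent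
positive if and only if for all symmetric positive semidefinite `V₁, V₂` with
`⟨V₁, V₂⟩_F = 0` one has `⟨L V₁, V₂⟩_F ≥ 0`, where `⟨M₁, M₂⟩_F = trace (M₁ᵀ M₂)` is the
Frobenius inner product. -/
theorem resolventPositive_iff_frobenius {n : ℕ}
    (L : Matrix (Fin n) (Fin n) ℝ →ₗ[ℝ] Matrix (Fin n) (Fin n) ℝ)
    (hLsymm : ∀ X : Matrix (Fin n) (Fin n) ℝ, X.IsSymm → (L X).IsSymm) :
    ResolventPositive (fun X => L X) ↔
      ∀ V₁ V₂ : Matrix (Fin n) (Fin n) ℝ, V₁.PosSemidef → V₂.PosSemidef →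
        (V₁ᵀ * V₂).trace = 0 → 0 ≤ ((L V₁)ᵀ * V₂).trace :=
  ⟨ResolventPositive.crossPositive, CrossPositive.resolventPositive hLsymm⟩
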